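/- arXiv:2403.11712 — 4 statements merged into one kernel-verified Lean document; each statement's English description precedes it below -/
import Mathlib

section
/- Let (Ω, Σ) be a measurable space, O ⊆ ℂᵈ open, f : O × Ω → ℂ with f(z,·) measurable for each z and f(·,t) bounded holomorphic for each t, and let φ be a bp-continuous linear functional on H^∞(O). Then the function t ↦ φ(f(·,t)) is Σ-measurable. -/
open Filter

/-- a linear functional on functions is bp-continuous (relative to `H^∞(O)`) -/
def BPContinuous {d : ℕ} (O : Set (Fin d → ℂ))
    (φ : ((Fin d → ℂ) → ℂ) →ₗ[ℂ] ℂ) : Prop :=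
  ∀ (g : ℕ → (Fin d → ℂ) → ℂ) (g₀ : (Fin d → ℂ) → ℂ),
    (∀ n, DifferentiableOn ℂ (g n) O) → DifferentiableOn ℂ g₀ O →
    (∃ C, ∀ n, ∀ z ∈ O, ‖g n z‖ ≤ C) → (∃ C, ∀ z ∈ O, ‖g₀ z‖ ≤ C) →
    (∀ z ∈ O, Tendsto (fun n => g n z) atTop (nhds (g₀ z))) →
    Tendsto (fun n => φ (g n)) atTop (nhds (φ g₀))

open Metric in
/-- Schwarz-lemma Lipschitz estimate for bounded holomorphic functions on `ℂᵈ`. -/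
lemma holo_lipschitz {d : ℕ} {O : Set (Fin d → ℂ)} (hO : IsOpen O)
    {g : (Fin d → ℂ) → ℂ} (hg : DifferentiableOn ℂ g O) {C : ℝ}
    (hC : ∀ z ∈ O, ‖g z‖ ≤ C) {z w : Fin d → ℂ} {R : ℝ} (hR : 0 < R)
    (hball : Metric.ball z R ⊆ O) (hw : w ∈ Metric.ball z R) :
    ‖g w - g z‖ ≤ (2 * C + 1) / R * ‖w - z‖ := by
  have hzO : z ∈ O := hball (mem_ball_self hR)
  rcases eq_or_ne w z with rfl | hne
  · simp
  have hwz : 0 < ‖w - z‖ := by rwa [norm_pos_iff, sub_ne_zero]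
  have hwR : ‖w - z‖ < R := by rwa [mem_ball, dist_eq_norm] at hw
  set r : ℝ := R / ‖w - z‖ with hr
  have hr1 : 1 < r := (one_lt_div hwz).2 hwR
  set L : ℂ → (Fin d → ℂ) := fun ζ => z + ζ • (w - z) with hL
  have hmapsL : ∀ ζ : ℂ, ζ ∈ ball (0 : ℂ) r → L ζ ∈ ball z R := by
    intro ζ hζ
    rw [mem_ball, dist_zero_right] at hζ
    rw [mem_ball, dist_eq_norm]
    have h1 : ‖L ζ - z‖ = ‖ζ‖ * ‖w - z‖ := by
      simp [hL, norm_smul]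
    rw [h1]
    calc ‖ζ‖ * ‖w - z‖ < r * ‖w - z‖ := by
          exact mul_lt_mul_of_pos_right hζ hwz
      _ = R := div_mul_cancel₀ _ (ne_of_gt hwz)
  set h : ℂ → ℂ := fun ζ => g (L ζ) with hh
  have hh0 : h 0 = g z := by simp [hh, hL]
  have hh1 : h 1 = g w := by simp [hh, hL]
  have hdL : ∀ ζ : ℂ, DifferentiableAt ℂ L ζ := fun ζ =>
    (differentiableAt_id.smul_const (w - z)).const_add z
  have hdh : DifferentiableOn ℂ h (ball (0 : ℂ) r) := by
    intro ζ hζ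
    exact ((hg.differentiableAt (hO.mem_nhds (hball (hmapsL ζ hζ)))).comp ζ
      (hdL ζ)).differentiableWithinAt
  have hmaps : Set.MapsTo h (ball (0 : ℂ) r) (ball (h 0) (2 * C + 1)) := by
    intro ζ hζ
    rw [mem_ball, hh0, dist_eq_norm]
    have h1 : ‖g (L ζ)‖ ≤ C := hC _ (hball (hmapsL ζ hζ))
    have h2 : ‖g z‖ ≤ C := hC _ hzO
    calc ‖g (L ζ) - g z‖ ≤ ‖g (L ζ)‖ + ‖g z‖ := norm_sub_le _ _
      _ < 2 * C + 1 := by linarith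
  have h1r : (1 : ℂ) ∈ ball (0 : ℂ) r := by
    rw [mem_ball, dist_zero_right, norm_one]; exact hr1
  have key := Complex.dist_le_div_mul_dist_of_mapsTo_ball hdh (hmaps.mono_right ball_subset_closedBall) h1r
  rw [hh1, hh0, dist_eq_norm, dist_zero_right, norm_one, mul_one] at key
  calc ‖g w - g z‖ ≤ (2 * C + 1) / r := key
    _ = (2 * C + 1) / R * ‖w - z‖ := by
        rw [hr]; field_simp

/-- Uniformly bounded holomorphic functions converging pointwise on a dense subset of `O`
converge pointwise on all of `O`. -/
lemma tendsto_on_of_tendsto_on_dense {d : ℕ} {O D : Set (Fin d → ℂ)} (hO : IsOpen O)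
    (hD : D ⊆ O) (hdense : O ⊆ closure D)
    {gk : ℕ → (Fin d → ℂ) → ℂ} {g : (Fin d → ℂ) → ℂ}
    (hgk : ∀ k, DifferentiableOn ℂ (gk k) O) (hg : DifferentiableOn ℂ g O)
    {C : ℝ} (hCk : ∀ k, ∀ z ∈ O, ‖gk k z‖ ≤ C) (hCg : ∀ z ∈ O, ‖g z‖ ≤ C)
    (hconv : ∀ w ∈ D, Tendsto (fun k => gk k w) atTop (nhds (g w))) :
    ∀ z ∈ O, Tendsto (fun k => gk k z) atTop (nhds (g z)) := by
  intro z hz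
  rcases Metric.isOpen_iff.mp hO z hz with ⟨R, hR, hball⟩
  have hC0 : 0 ≤ C := le_trans (norm_nonneg _) (hCg z hz)
  set L : ℝ := (2 * C + 1) / R with hLdef
  have hL0 : 0 < L := by positivity
  rw [Metric.tendsto_atTop]
  intro ε hε
  obtain ⟨w, hwD, hwz⟩ : ∃ w ∈ D, dist z w < min R (ε / (3 * (L + 1))) :=
    Metric.mem_closure_iff.mp (hdense hz) _ (by positivity)
  have hwball : w ∈ Metric.ball z R := by
    rw [Metric.mem_ball, dist_comm]
    exact lt_of_lt_of_le hwz (min_le_left _ _)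
  have hwsmall : ‖w - z‖ < ε / (3 * (L + 1)) := by
    rw [← dist_eq_norm, dist_comm]
    exact lt_of_lt_of_le hwz (min_le_right _ _)
  have hterm : ∀ h : (Fin d → ℂ) → ℂ, DifferentiableOn ℂ h O →
      (∀ x ∈ O, ‖h x‖ ≤ C) → ‖h w - h z‖ < ε / 3 := by
    intro h hd hb
    calc ‖h w - h z‖ ≤ L * ‖w - z‖ := holo_lipschitz hO hd hb hR hball hwball
      _ ≤ (L + 1) * ‖w - z‖ := by nlinarith [norm_nonneg (w - z)]
      _ < (L + 1) * (ε / (3 * (L + 1))) := by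
          exact mul_lt_mul_of_pos_left hwsmall (by linarith)
      _ = ε / 3 := by field_simp
  rcases Metric.tendsto_atTop.mp (hconv w hwD) (ε / 3) (by positivity) with ⟨N, hN⟩
  refine ⟨N, fun k hk => ?_⟩
  have h1 : dist (gk k z) (gk k w) < ε / 3 := by
    rw [dist_eq_norm, ← norm_neg]
    simpa [neg_sub] using hterm (gk k) (hgk k) (hCk k)
  have h2 : dist (g w) (g z) < ε / 3 := by
    rw [dist_eq_norm]; exact hterm g hg hCg
  have h3 := hN k hk
  calc dist (gk k z) (g z)
      ≤ dist (gk k z) (gk k w) + dist (gk k w) (g w) + dist (g w) (g z) :=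
        dist_triangle4 _ _ _ _
    _ < ε / 3 + ε / 3 + ε / 3 := by gcongr
    _ = ε := by ring

/-- A bound on a dense subset of `O` extends to all of `O` by continuity. -/
lemma norm_le_on_of_dense {d : ℕ} {O D : Set (Fin d → ℂ)} (hO : IsOpen O)
    (hdense : O ⊆ closure D) {g : (Fin d → ℂ) → ℂ} (hg : DifferentiableOn ℂ g O)
    {M : ℝ} (hM : ∀ w ∈ D, ‖g w‖ ≤ M) : ∀ z ∈ O, ‖g z‖ ≤ M := by
  intro z hz
  have hc : ContinuousAt g z := (hg.differentiableAt (hO.mem_nhds hz)).continuousAt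
  have hne : (nhdsWithin z D).NeBot := mem_closure_iff_nhdsWithin_neBot.mp (hdense hz)
  have ht : Tendsto (fun x => ‖g x‖) (nhdsWithin z D) (nhds ‖g z‖) :=
    (hc.norm).tendsto.mono_left nhdsWithin_le_nhds
  exact le_of_tendsto ht (eventually_nhdsWithin_of_forall hM)

/-- If `f(z,·)` is measurable for each `z ∈ O`, `f(·,t)` is bounded holomorphic on the
open set `O ⊆ ℂᵈ` for each `t`, and `φ` is a bp-continuous linear functional on
`H^∞(O)`, then `t ↦ φ(f(·,t))` is measurable. -/
theorem measurable_apply_bp_functional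
    {d : ℕ} (O : Set (Fin d → ℂ)) (hO : IsOpen O)
    {Ω : Type*} [MeasurableSpace Ω] (f : (Fin d → ℂ) → Ω → ℂ)
    (hmeas : ∀ z ∈ O, Measurable (f z))
    (hholo : ∀ t : Ω, DifferentiableOn ℂ (fun z => f z t) O)
    (hbdd : ∀ t : Ω, ∃ C : ℝ, ∀ z ∈ O, ‖f z t‖ ≤ C)
    (φ : ((Fin d → ℂ) → ℂ) →ₗ[ℂ] ℂ) (hφ : BPContinuous O φ) :
    Measurable (fun t => φ (fun z => f z t)) := by
  classical
  rcases isEmpty_or_nonempty Ω with hΩ | hΩ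
  · exact measurable_of_empty _
  rcases Set.eq_empty_or_nonempty O with hOe | hOne
  · -- `O = ∅` : the function is constant
    subst hOe
    have hconst : ∀ t t' : Ω, φ (fun z => f z t') = φ (fun z => f z t) := by
      intro t t'
      refine tendsto_nhds_unique tendsto_const_nhds
        (hφ (fun _ => fun z => f z t') (fun z => f z t) (fun _ => differentiableOn_empty)
          differentiableOn_empty ⟨0, by simp⟩ ⟨0, by simp⟩ (by simp))
    obtain ⟨t₀⟩ := hΩ
    have heq : (fun t => φ (fun z => f z t)) = fun _ => φ (fun z => f z t₀) :=
      funext fun t => hconst t₀ t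
    rw [heq]; exact measurable_const
  -- countable dense subset of `O`
  obtain ⟨s, hsc, hsd⟩ := TopologicalSpace.exists_countable_dense (↥O)
  have hOne' : Nonempty ↥O := hOne.to_subtype
  set D : Set (Fin d → ℂ) := Subtype.val '' s with hDdef
  have hD : D ⊆ O := by rintro _ ⟨⟨x, hx⟩, _, rfl⟩; exact hx
  have hdense : O ⊆ closure D := by
    intro z hz
    have h1 : (⟨z, hz⟩ : ↥O) ∈ closure s := by rw [hsd.closure_eq]; trivial
    exact image_closure_subset_closure_image continuous_subtype_val
      (Set.mem_image_of_mem _ h1)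
  have hDne : D.Nonempty := (hsd.nonempty).image _
  have hDcount : D.Countable := hsc.image _
  obtain ⟨e, hDe⟩ := hDcount.exists_eq_range hDne
  have heO : ∀ k, e k ∈ O := fun k => hD (by rw [hDe]; exact ⟨k, rfl⟩)
  -- the measurable slices
  set A : ℕ → Set Ω := fun n => ⋂ k, (fun t => ‖f (e k) t‖) ⁻¹' Set.Iic (n : ℝ) with hAdef
  have hAmeas : ∀ n, MeasurableSet (A n) := fun n =>
    MeasurableSet.iInter fun k => ((hmeas (e k) (heO k)).norm) measurableSet_Iic
  have hAmem : ∀ (t : Ω) (n : ℕ), t ∈ A n ↔ ∀ k, ‖f (e k) t‖ ≤ (n : ℝ) := by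
    intro t n; simp [hAdef]
  have hcover : ∀ t : Ω, ∃ n, t ∈ A n := by
    intro t
    obtain ⟨C, hC⟩ := hbdd t
    obtain ⟨n, hn⟩ := exists_nat_ge C
    exact ⟨n, (hAmem t n).2 fun k => le_trans (hC _ (heO k)) hn⟩
  have hAbound : ∀ (n : ℕ), ∀ t ∈ A n, ∀ z ∈ O, ‖f z t‖ ≤ (n : ℝ) := by
    intro n t ht
    refine norm_le_on_of_dense hO hdense (hholo t) ?_
    intro w hw
    rw [hDe] at hw
    obtain ⟨k, rfl⟩ := hw
    exact (hAmem t n).1 ht k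
  -- reduce to the slices
  suffices key : ∀ (n : ℕ) (u : Set ℂ), MeasurableSet u →
      MeasurableSet ((fun t => φ (fun z => f z t)) ⁻¹' u ∩ A n) by
    intro u hu
    have hcov : (fun t => φ (fun z => f z t)) ⁻¹' u =
        ⋃ n, ((fun t => φ (fun z => f z t)) ⁻¹' u ∩ A n) := by
      ext t
      simp only [Set.mem_iUnion, Set.mem_inter_iff, Set.mem_preimage]
      constructor
      · intro h'
        obtain ⟨n, hn⟩ := hcover t
        exact ⟨n, h', hn⟩
      · rintro ⟨n, h', _⟩; exact h'
    rw [hcov]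
    exact MeasurableSet.iUnion fun n => key n u hu
  intro n u hu
  -- the set of possible value-sequences on `D`
  set S : Set (ℕ → ℂ) := {v | ∃ g : (Fin d → ℂ) → ℂ,
    DifferentiableOn ℂ g O ∧ (∀ z ∈ O, ‖g z‖ ≤ (n : ℝ)) ∧ ∀ k, g (e k) = v k} with hSdef
  have hS : ∀ v : ℕ → ℂ, v ∈ S → ∃ g : (Fin d → ℂ) → ℂ,
      DifferentiableOn ℂ g O ∧ (∀ z ∈ O, ‖g z‖ ≤ (n : ℝ)) ∧ ∀ k, g (e k) = v k :=
    fun v hv => hv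
  let pick : ↥S → ((Fin d → ℂ) → ℂ) := fun v => (hS v.1 v.2).choose
  have hpick : ∀ v : ↥S, DifferentiableOn ℂ (pick v) O ∧
      (∀ z ∈ O, ‖pick v z‖ ≤ (n : ℝ)) ∧ ∀ k, pick v (e k) = v.1 k :=
    fun v => (hS v.1 v.2).choose_spec
  let Φ : ↥S → ℂ := fun v => φ (pick v)
  -- `Φ` is sequentially continuous, hence continuous, hence measurable
  have hΦseq : SeqContinuous Φ := by
    intro vj v hv
    have hcomp : ∀ k, Tendsto (fun j => (vj j).1 k) atTop (nhds (v.1 k)) := by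
      have h1 : Tendsto (fun j => (vj j).1) atTop (nhds v.1) :=
        (continuous_subtype_val.tendsto v).comp hv
      exact fun k => tendsto_pi_nhds.mp h1 k
    have hDconv : ∀ w ∈ D, Tendsto (fun j => pick (vj j) w) atTop (nhds (pick v w)) := by
      intro w hw
      rw [hDe] at hw
      obtain ⟨k, rfl⟩ := hw
      have h1 : (fun j => pick (vj j) (e k)) = fun j => (vj j).1 k :=
        funext fun j => (hpick (vj j)).2.2 k
      rw [h1, (hpick v).2.2 k]
      exact hcomp k
    have hOconv := tendsto_on_of_tendsto_on_dense hO hD hdense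
      (fun j => (hpick (vj j)).1) (hpick v).1
      (fun j => (hpick (vj j)).2.1) (hpick v).2.1 hDconv
    exact hφ _ _ (fun j => (hpick (vj j)).1) (hpick v).1
      ⟨n, fun j => (hpick (vj j)).2.1⟩ ⟨n, (hpick v).2.1⟩ hOconv
  have hΦm : Measurable Φ := hΦseq.continuous.measurable
  obtain ⟨T, hT, hTeq⟩ := MeasurableSpace.measurableSet_comap.mp (hΦm hu)
  -- the evaluation map
  set F : Ω → ℕ → ℂ := fun t k => f (e k) t with hFdef
  have hF : Measurable F := measurable_pi_lambda _ fun k => hmeas (e k) (heO k)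
  have hFS : ∀ t ∈ A n, F t ∈ S := fun t ht =>
    ⟨fun z => f z t, hholo t, hAbound n t ht, fun k => rfl⟩
  -- on `A n`, `φ (f_t)` is `Φ` of the evaluation sequence
  have hval : ∀ (t : Ω) (ht : t ∈ A n), φ (fun z => f z t) = Φ ⟨F t, hFS t ht⟩ := by
    intro t ht
    set v : ↥S := ⟨F t, hFS t ht⟩ with hvdef
    have hagree : ∀ w ∈ D, pick v w = f w t := by
      intro w hw
      rw [hDe] at hw
      obtain ⟨k, rfl⟩ := hw
      exact (hpick v).2.2 k
    have hOconv := tendsto_on_of_tendsto_on_dense hO hD hdense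
      (gk := fun _ => pick v) (g := fun z => f z t)
      (fun _ => (hpick v).1) (hholo t)
      (fun _ => (hpick v).2.1) (hAbound n t ht)
      (fun w hw => by simp only [hagree w hw]; exact tendsto_const_nhds)
    have := hφ (fun _ => pick v) (fun z => f z t)
      (fun _ => (hpick v).1) (hholo t)
      ⟨n, fun _ => (hpick v).2.1⟩ ⟨n, hAbound n t ht⟩ hOconv
    exact (tendsto_nhds_unique tendsto_const_nhds this).symm
  have hset : (fun t => φ (fun z => f z t)) ⁻¹' u ∩ A n = F ⁻¹' T ∩ A n := by
    ext t
    simp only [Set.mem_inter_iff, Set.mem_preimage]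
    constructor
    · rintro ⟨h1, h2⟩
      refine ⟨?_, h2⟩
      have hmem : (⟨F t, hFS t h2⟩ : ↥S) ∈ Φ ⁻¹' u := by
        rw [Set.mem_preimage, ← hval t h2]; exact h1
      rw [← hTeq] at hmem
      exact hmem
    · rintro ⟨h1, h2⟩
      refine ⟨?_, h2⟩
      have hmem : (⟨F t, hFS t h2⟩ : ↥S) ∈ Subtype.val ⁻¹' T := h1
      rw [hTeq, Set.mem_preimage] at hmem
      rw [hval t h2]
      exact hmem
  rw [hset]
  exact (hF hT).inter (hAmeas n)
end

section
/- Let (Ω, Σ, μ) be a semi-finite measure space, O ⊆ ℂᵈ open, and f : O × Ω → ℂ with f(z,·) measurable for each z, sup_{z ∈ O} esssup_{t} |f(z,t)| < ∞, and f(·,t) bounded holomorphic for each t. Let φ be a bp-continuous linear functional on H^∞(O). Then t ↦ φ(f(·,t)) is measurable and essentially bounded with esssup_t |φ(f(·,t))| ≤ ‖φ‖ · sup_{z∈O} ‖f(z,·)‖_{L^∞}, and for every g ∈ L^1(Ω): ∫ φ(f(·,t)) g(t) μ(dt) = φ( z ↦ ∫ f(z,t) g(t) μ(dt) ). -/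
open MeasureTheory ENNReal Filter Metric Topology

/-! ### Auxiliary lemmas -/

section Aux

/-- coordinate unit vectors -/
noncomputable def expSing {d : ℕ} (i : Fin d) : Fin d → ℂ := Pi.single i 1

lemma norm_expSing {d : ℕ} (i : Fin d) : ‖expSing i‖ = 1 := by
  rw [expSing, Pi.norm_single]; simp

/-- Cauchy/Schwarz-type Lipschitz estimate for bounded holomorphic functions. -/
lemma lipA {d : ℕ} {O : Set (Fin d → ℂ)} (hO : IsOpen O)
    {h : (Fin d → ℂ) → ℂ} (hh : DifferentiableOn ℂ h O) {C : ℝ}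
    (hb : ∀ z ∈ O, ‖h z‖ ≤ C) {z₀ : Fin d → ℂ} {R : ℝ} (hR : 0 < R)
    (hsub : Metric.ball z₀ R ⊆ O) :
    ∀ z ∈ Metric.ball z₀ (R/4), ∀ w ∈ Metric.ball z₀ (R/4),
      ‖h z - h w‖ ≤ (4*C/R) * ‖z - w‖ := by
  intro z hz w hw
  have hC : 0 ≤ C := le_trans (norm_nonneg _) (hb z₀ (hsub (mem_ball_self hR)))
  rcases eq_or_ne z w with rfl | hzw
  · simp [mul_nonneg (div_nonneg (by linarith) hR.le) (norm_nonneg _)]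
  have hzwn : 0 < ‖z - w‖ := by
    rw [norm_pos_iff]; exact sub_ne_zero.2 hzw
  have hzw2 : ‖z - w‖ < R/2 := by
    have := dist_triangle z z₀ w
    rw [← dist_eq_norm]
    rw [mem_ball] at hz hw
    rw [dist_comm w z₀] at hw
    linarith
  set ρ : ℝ := (R/2)/‖z - w‖ with hρdef
  have hρ1 : 1 < ρ := (one_lt_div hzwn).2 hzw2
  have hρ0 : 0 < ρ := lt_trans one_pos hρ1
  set u : ℂ → ℂ := fun l => h (w + l • (z - w)) with hu
  have hmapsO : ∀ l : ℂ, l ∈ ball (0:ℂ) ρ → w + l • (z - w) ∈ O := by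
    intro l hl
    apply hsub
    rw [mem_ball] at hl hw ⊢
    rw [dist_eq_norm] at hl hw ⊢
    simp only [sub_zero] at hl
    calc ‖w + l • (z - w) - z₀‖ ≤ ‖w - z₀‖ + ‖l • (z - w)‖ := by
          rw [add_sub_right_comm]; exact norm_add_le _ _
      _ ≤ ‖w - z₀‖ + ‖l‖ * ‖z - w‖ := by rw [norm_smul]
      _ < R/4 + ρ * ‖z - w‖ := by
          have h2 : ‖l‖ * ‖z - w‖ ≤ ρ * ‖z - w‖ :=
            mul_le_mul_of_nonneg_right hl.le (norm_nonneg _)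
          linarith
      _ ≤ R := by
          rw [hρdef, div_mul_cancel₀ _ (ne_of_gt hzwn)]; linarith
  have hud : DifferentiableOn ℂ u (ball (0:ℂ) ρ) := by
    intro l hl
    have h1 : DifferentiableAt ℂ (fun l : ℂ => w + l • (z - w)) l :=
      (differentiableAt_id.smul_const (z - w)).const_add w
    have h2 : DifferentiableAt ℂ h (w + l • (z - w)) :=
      hh.differentiableAt (hO.mem_nhds (hmapsO l hl))
    exact (h2.comp l h1).differentiableWithinAt
  have hu0 : u 0 = h w := by simp [hu]
  have hu1 : u 1 = h z := by simp [hu]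
  have key : ∀ ε > (0:ℝ), ‖h z - h w‖ ≤ (2*C + ε)/ρ := by
    intro ε hε
    have hmaps : Set.MapsTo u (ball (0:ℂ) ρ) (ball (u 0) (2*C + ε)) := by
      intro l hl
      rw [mem_ball, dist_eq_norm]
      calc ‖u l - u 0‖ ≤ ‖u l‖ + ‖u 0‖ := norm_sub_le _ _
        _ ≤ C + C := add_le_add (hb _ (hmapsO l hl))
            (by rw [hu0]; exact hb _ (hsub (mem_ball.2 (lt_of_lt_of_le (mem_ball.1 hw)
              (by linarith)))))
        _ < 2*C + ε := by linarith
    have h1mem : (1:ℂ) ∈ ball (0:ℂ) ρ := by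
      rw [mem_ball, dist_eq_norm]; simpa using hρ1
    have := Complex.dist_le_div_mul_dist_of_mapsTo_ball hud (hmaps.mono_right ball_subset_closedBall) h1mem
    rw [hu0, hu1, dist_eq_norm, dist_eq_norm] at this
    simpa using this
  have lim : ‖h z - h w‖ ≤ (2*C)/ρ := by
    refine le_of_forall_pos_le_add fun ε hε => ?_
    have := key (ε * ρ) (by positivity)
    calc ‖h z - h w‖ ≤ (2*C + ε*ρ)/ρ := this
      _ = 2*C/ρ + ε := by field_simp
  calc ‖h z - h w‖ ≤ (2*C)/ρ := lim
    _ = (4*C/R) * ‖z - w‖ := by rw [hρdef]; field_simp; ring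

/-- Pointwise convergence on a dense sequence extends to pointwise convergence on `O`
for uniformly bounded holomorphic functions. -/
lemma ptwiseA {d : ℕ} {O : Set (Fin d → ℂ)} (hO : IsOpen O) {e : ℕ → Fin d → ℂ}
    (hdense : ∀ z ∈ O, ∀ ε > (0:ℝ), ∃ k, e k ∈ O ∧ dist (e k) z < ε)
    {u : ℕ → (Fin d → ℂ) → ℂ} {v : (Fin d → ℂ) → ℂ} {C : ℝ}
    (hud : ∀ n, DifferentiableOn ℂ (u n) O) (hvd : DifferentiableOn ℂ v O)
    (hub : ∀ n, ∀ z ∈ O, ‖u n z‖ ≤ C) (hvb : ∀ z ∈ O, ‖v z‖ ≤ C)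
    (hconv : ∀ k, e k ∈ O → Tendsto (fun n => u n (e k)) atTop (𝓝 (v (e k)))) :
    ∀ z ∈ O, Tendsto (fun n => u n z) atTop (𝓝 (v z)) := by
  intro z hz
  have hC : 0 ≤ C := le_trans (norm_nonneg _) (hvb z hz)
  rw [Metric.tendsto_atTop]
  intro ε hε
  obtain ⟨R, hR, hball⟩ := Metric.isOpen_iff.1 hO z hz
  set L : ℝ := 4*C/R with hL
  have hL0 : 0 ≤ L := by positivity
  obtain ⟨k, hkO, hk⟩ := hdense z hz (min (R/4) (ε/(3*(L+1)))) (by positivity)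
  have hk1 : dist (e k) z < R/4 := lt_of_lt_of_le hk (min_le_left _ _)
  have hk2 : dist (e k) z < ε/(3*(L+1)) := lt_of_lt_of_le hk (min_le_right _ _)
  have hzball : z ∈ ball z (R/4) := mem_ball_self (by linarith)
  have hekball : e k ∈ ball z (R/4) := mem_ball.2 hk1
  have hLe : L * dist (e k) z < ε/3 := by
    calc L * dist (e k) z ≤ L * (ε/(3*(L+1))) :=
          mul_le_mul_of_nonneg_left hk2.le hL0
      _ < ε/3 := by
          rw [mul_div_assoc', div_lt_div_iff₀ (by positivity) (by norm_num)]
          nlinarith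
  obtain ⟨N, hN⟩ := (Metric.tendsto_atTop.1 (hconv k hkO)) (ε/3) (by linarith)
  refine ⟨N, fun n hn => ?_⟩
  have t1 : dist (u n z) (u n (e k)) < ε/3 := by
    have := lipA hO (hud n) (hub n) hR hball z hzball (e k) hekball
    rw [dist_eq_norm]
    calc ‖u n z - u n (e k)‖ ≤ L * ‖z - e k‖ := this
      _ = L * dist (e k) z := by rw [← dist_eq_norm, dist_comm]
      _ < ε/3 := hLe
  have t3 : dist (v (e k)) (v z) < ε/3 := by
    have := lipA hO hvd hvb hR hball (e k) hekball z hzball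
    rw [dist_eq_norm]
    calc ‖v (e k) - v z‖ ≤ L * ‖e k - z‖ := this
      _ = L * dist (e k) z := by rw [← dist_eq_norm]
      _ < ε/3 := hLe
  calc dist (u n z) (v z) ≤ dist (u n z) (u n (e k)) + dist (u n (e k)) (v (e k))
        + dist (v (e k)) (v z) := dist_triangle4 _ _ _ _
    _ < ε/3 + ε/3 + ε/3 := by
        have := hN n hn
        linarith
    _ = ε := by ring

/-- A bound on a dense sequence extends to a bound on all of `O`. -/
lemma boundA {d : ℕ} {O : Set (Fin d → ℂ)} (hO : IsOpen O) {e : ℕ → Fin d → ℂ}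
    (hdense : ∀ z ∈ O, ∀ ε > (0:ℝ), ∃ k, e k ∈ O ∧ dist (e k) z < ε)
    {h : (Fin d → ℂ) → ℂ} (hh : DifferentiableOn ℂ h O) {m : ℝ}
    (hb : ∀ k, e k ∈ O → ‖h (e k)‖ ≤ m) : ∀ z ∈ O, ‖h z‖ ≤ m := by
  intro z hz
  have hcont : ContinuousAt h z := (hh.differentiableAt (hO.mem_nhds hz)).continuousAt
  have hch : ∀ i : ℕ, ∃ k, e k ∈ O ∧ dist (e k) z < 1/(i+1) :=
    fun i => hdense z hz (1/(i+1)) (by positivity)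
  choose k hkO hkd using hch
  have htend : Tendsto (fun i => e (k i)) atTop (𝓝 z) := by
    rw [Metric.tendsto_atTop]
    intro ε hε
    obtain ⟨N, hN⟩ := exists_nat_one_div_lt hε
    refine ⟨N, fun i hi => ?_⟩
    calc dist (e (k i)) z < 1/(i+1) := hkd i
      _ ≤ 1/(N+1) := by
          apply div_le_div_of_nonneg_left one_pos.le (by positivity)
          have hNi : (N:ℝ) ≤ i := Nat.cast_le.mpr hi
          linarith
      _ < ε := hN
  have : Tendsto (fun i => ‖h (e (k i))‖) atTop (𝓝 ‖h z‖) :=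
    (hcont.tendsto.comp htend).norm
  exact le_of_tendsto this (Filter.Eventually.of_forall fun i => hb (k i) (hkO i))

/-- approximation of a pointwise family of holomorphic functions by simple functions -/
lemma approxB {d : ℕ} {O : Set (Fin d → ℂ)} (hO : IsOpen O)
    {e : ℕ → Fin d → ℂ} (heO : ∀ k, e k ∈ O)
    (hdense : ∀ z ∈ O, ∀ ε > (0:ℝ), ∃ k, e k ∈ O ∧ dist (e k) z < ε)
    {Ω : Type*} [MeasurableSpace Ω] [Nonempty Ω]
    (f₁ : (Fin d → ℂ) → Ω → ℂ)
    (hm : ∀ z ∈ O, Measurable (f₁ z))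
    (hh : ∀ t, DifferentiableOn ℂ (fun z => f₁ z t) O)
    {C : ℝ} (hb : ∀ t, ∀ z ∈ O, ‖f₁ z t‖ ≤ C) :
    ∃ S : ℕ → SimpleFunc Ω ((Fin d → ℂ) → ℂ),
      (∀ n t, ∃ τ : Ω, S n t = fun z => f₁ z τ) ∧
      (∀ t, ∀ z ∈ O, Tendsto (fun n => S n t z) atTop (𝓝 (f₁ z t))) := by
  classical
  letI : PseudoMetricSpace (ℕ → ℂ) := TopologicalSpace.pseudoMetrizableSpacePseudoMetric _
  set Φ : Ω → ℕ → ℂ := fun t k => f₁ (e k) t with hΦdef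
  have hΦ : Measurable Φ := measurable_pi_lambda _ (fun k => hm (e k) (heO k))
  obtain ⟨t₀⟩ : Nonempty Ω := inferInstance
  set ψ : ℕ → SimpleFunc Ω (ℕ → ℂ) := fun n =>
    SimpleFunc.approxOn Φ hΦ (Set.range Φ) (Φ t₀) (Set.mem_range_self t₀) n with hψdef
  set pick : (ℕ → ℂ) → Ω := fun y => if h : ∃ τ, Φ τ = y then h.choose else t₀ with hpickdef
  refine ⟨fun n => (ψ n).map (fun y => fun z => f₁ z (pick y)), fun n t => ⟨pick (ψ n t), rfl⟩,
    fun t z hz => ?_⟩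
  have hmem : ∀ n, ψ n t ∈ Set.range Φ := fun n =>
    SimpleFunc.approxOn_mem hΦ (Set.mem_range_self t₀) n t
  have hpick : ∀ n, Φ (pick (ψ n t)) = ψ n t := by
    intro n
    have h : ∃ τ, Φ τ = ψ n t := hmem n
    simp only [hpickdef, dif_pos h]
    exact h.choose_spec
  have hconv : Tendsto (fun n => ψ n t) atTop (𝓝 (Φ t)) :=
    SimpleFunc.tendsto_approxOn hΦ (Set.mem_range_self t₀) (subset_closure (Set.mem_range_self t))
  have hcoord : ∀ k, Tendsto (fun n => ψ n t k) atTop (𝓝 (Φ t k)) := by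
    intro k
    exact ((continuous_apply k).continuousAt.tendsto).comp hconv
  have := ptwiseA (e := e) hO hdense
    (u := fun n => fun z => f₁ z (pick (ψ n t))) (v := fun z => f₁ z t) (C := C)
    (fun n => hh _) (hh t) (fun n => hb _) (hb t) ?_ z hz
  · simpa using this
  · intro k hkO
    have heq : ∀ n, f₁ (e k) (pick (ψ n t)) = ψ n t k := by
      intro n
      have h := hpick n
      calc f₁ (e k) (pick (ψ n t)) = Φ (pick (ψ n t)) k := rfl
        _ = ψ n t k := by rw [h]
    simp only [heq]
    exact hcoord k

variable {d : ℕ} {Ω : Type*} [MeasurableSpace Ω] {μ : Measure Ω} {g : Ω → ℂ}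

lemma intSimple (hg : Integrable g μ) (T : SimpleFunc Ω ((Fin d → ℂ) → ℂ))
    (h : ((Fin d → ℂ) → ℂ) → ℂ) : Integrable (fun t => h (T t) * g t) μ := by
  obtain ⟨C, hC⟩ := (T.map h).exists_forall_norm_le
  exact hg.bdd_mul (T.map h).measurable.aestronglyMeasurable (ae_of_all _ hC)

lemma keyInd (hg : Integrable g μ) {s : Set Ω} (hs : MeasurableSet s) (a : ℂ) :
    ∫ t, s.indicator (fun _ => a) t * g t ∂μ = a * ∫ t in s, g t ∂μ := by
  classical
  have h1 : (fun t => s.indicator (fun _ => a) t * g t) = s.indicator (fun t => a * g t) := by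
    funext t
    by_cases ht : t ∈ s <;> simp [Set.indicator_apply, ht]
  rw [h1, integral_indicator hs, ← smul_eq_mul, ← integral_smul]
  simp [smul_eq_mul]

lemma simpleC (hg : Integrable g μ) (φ : ((Fin d → ℂ) → ℂ) →ₗ[ℂ] ℂ)
    (T : SimpleFunc Ω ((Fin d → ℂ) → ℂ)) :
    ∫ t, φ (T t) * g t ∂μ = φ (fun z => ∫ t, T t z * g t ∂μ) := by
  classical
  induction T using MeasureTheory.SimpleFunc.induction with
  | const c hs =>
    rename_i s
    have hTt : ∀ t, (SimpleFunc.piecewise s hs (SimpleFunc.const Ω c)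
        (SimpleFunc.const Ω (0 : (Fin d → ℂ) → ℂ))) t = if t ∈ s then c else 0 := by
      intro t
      simp [SimpleFunc.piecewise_apply]
    have lhs : ∫ t, φ ((SimpleFunc.piecewise s hs (SimpleFunc.const Ω c)
        (SimpleFunc.const Ω (0 : (Fin d → ℂ) → ℂ))) t) * g t ∂μ = φ c * ∫ t in s, g t ∂μ := by
      rw [show (fun t => φ ((SimpleFunc.piecewise s hs (SimpleFunc.const Ω c)
          (SimpleFunc.const Ω (0 : (Fin d → ℂ) → ℂ))) t) * g t)
        = fun t => s.indicator (fun _ => φ c) t * g t from ?_]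
      · exact keyInd hg hs (φ c)
      · funext t
        rw [hTt t]
        by_cases ht : t ∈ s <;> simp [Set.indicator_apply, ht]
    rw [lhs]
    have rhs : (fun z => ∫ t, (SimpleFunc.piecewise s hs (SimpleFunc.const Ω c)
        (SimpleFunc.const Ω (0 : (Fin d → ℂ) → ℂ))) t z * g t ∂μ) = (∫ t in s, g t ∂μ) • c := by
      funext z
      rw [show (fun t => (SimpleFunc.piecewise s hs (SimpleFunc.const Ω c)
          (SimpleFunc.const Ω (0 : (Fin d → ℂ) → ℂ))) t z * g t)
        = fun t => s.indicator (fun _ => c z) t * g t from ?_]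
      · rw [keyInd hg hs (c z)]
        simp [smul_eq_mul, mul_comm]
      · funext t
        rw [hTt t]
        by_cases ht : t ∈ s <;> simp [Set.indicator_apply, ht]
    rw [rhs, _root_.map_smul, smul_eq_mul, mul_comm]
  | add hdisj ih1 ih2 =>
    rename_i T1 T2
    have hadd : ∀ t, (T1 + T2) t = T1 t + T2 t := fun t => rfl
    have e1 : ∫ t, φ ((T1 + T2) t) * g t ∂μ
        = (∫ t, φ (T1 t) * g t ∂μ) + ∫ t, φ (T2 t) * g t ∂μ := by
      rw [← integral_add (intSimple hg T1 φ) (intSimple hg T2 φ)]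
      congr 1
      funext t
      rw [hadd t, map_add]
      ring
    have e2 : (fun z => ∫ t, (T1 + T2) t z * g t ∂μ)
        = (fun z => ∫ t, T1 t z * g t ∂μ) + fun z => ∫ t, T2 t z * g t ∂μ := by
      funext z
      simp only [Pi.add_apply]
      rw [← integral_add (intSimple hg T1 (fun w => w z)) (intSimple hg T2 (fun w => w z))]
      congr 1
      funext t
      rw [hadd t]
      simp [Pi.add_apply]
      ring
    rw [e1, e2, map_add, ih1, ih2]

lemma simpleD {O : Set (Fin d → ℂ)} (hg : Integrable g μ)
    (T : SimpleFunc Ω ((Fin d → ℂ) → ℂ)) (hT : ∀ t, DifferentiableOn ℂ (T t) O) :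
    DifferentiableOn ℂ (fun z => ∫ t, T t z * g t ∂μ) O := by
  classical
  induction T using MeasureTheory.SimpleFunc.induction with
  | const c hs =>
    rename_i s
    have hTt : ∀ t, (SimpleFunc.piecewise s hs (SimpleFunc.const Ω c)
        (SimpleFunc.const Ω (0 : (Fin d → ℂ) → ℂ))) t = if t ∈ s then c else 0 := by
      intro t
      simp [SimpleFunc.piecewise_apply]
    have heq : (fun z => ∫ t, (SimpleFunc.piecewise s hs (SimpleFunc.const Ω c)
        (SimpleFunc.const Ω (0 : (Fin d → ℂ) → ℂ))) t z * g t ∂μ)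
        = fun z => c z * ∫ t in s, g t ∂μ := by
      funext z
      rw [show (fun t => (SimpleFunc.piecewise s hs (SimpleFunc.const Ω c)
          (SimpleFunc.const Ω (0 : (Fin d → ℂ) → ℂ))) t z * g t)
        = fun t => s.indicator (fun _ => c z) t * g t from ?_]
      · exact keyInd hg hs (c z)
      · funext t
        rw [hTt t]
        by_cases ht : t ∈ s <;> simp [Set.indicator_apply, ht]
    rw [heq]
    rcases Set.eq_empty_or_nonempty s with rfl | ⟨t₁, ht₁⟩
    · simp only [Measure.restrict_empty, integral_zero_measure, mul_zero]
      exact differentiableOn_const 0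
    · have hc : DifferentiableOn ℂ c O := by
        have := hT t₁
        rwa [hTt t₁, if_pos ht₁] at this
      exact hc.mul_const _
  | add hdisj ih1 ih2 =>
    rename_i T1 T2
    have hT1 : ∀ t, DifferentiableOn ℂ (T1 t) O := by
      intro t
      by_cases h1 : T1 t = 0
      · rw [h1]; exact differentiableOn_const 0
      · have h2 : T2 t = 0 := by
          by_contra h2
          exact (Set.disjoint_left.1 hdisj (by simpa [Function.mem_support] using h1))
            (by simpa [Function.mem_support] using h2)
        have heq : (T1 + T2) t = T1 t := by
          show T1 t + T2 t = T1 t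
          rw [h2, add_zero]
        rw [← heq]
        exact hT t
    have hT2 : ∀ t, DifferentiableOn ℂ (T2 t) O := by
      intro t
      by_cases h2 : T2 t = 0
      · rw [h2]; exact differentiableOn_const 0
      · have h1 : T1 t = 0 := by
          by_contra h1
          exact (Set.disjoint_left.1 hdisj (by simpa [Function.mem_support] using h1))
            (by simpa [Function.mem_support] using h2)
        have heq : (T1 + T2) t = T2 t := by
          show T1 t + T2 t = T2 t
          rw [h1, zero_add]
        rw [← heq]
        exact hT t
    have e2 : (fun z => ∫ t, (T1 + T2) t z * g t ∂μ)
        = fun z => (∫ t, T1 t z * g t ∂μ) + ∫ t, T2 t z * g t ∂μ := by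
      funext z
      rw [← integral_add (intSimple hg T1 (fun w => w z)) (intSimple hg T2 (fun w => w z))]
      congr 1
      funext t
      show (T1 t + T2 t) z * g t = _
      simp [Pi.add_apply]
      ring
    rw [e2]
    exact (ih1 hT1).add (ih2 hT2)

lemma clm_repr (L : (Fin d → ℂ) →L[ℂ] ℂ) :
    L = ∑ i, L (expSing i) • ContinuousLinearMap.proj i := by
  ext v
  have hv : v = ∑ i, Pi.single i (v i) := (Finset.univ_sum_single v).symm
  rw [ContinuousLinearMap.sum_apply]
  conv_lhs => rw [hv]
  rw [map_sum]
  congr 1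
  funext i
  have h1 : (Pi.single i (v i) : Fin d → ℂ) = v i • expSing i := by
    funext j
    by_cases hj : j = i
    · subst hj; simp [expSing]
    · simp [expSing, Pi.single_apply, hj]
  rw [h1, L.map_smul]
  simp [ContinuousLinearMap.smul_apply, ContinuousLinearMap.proj_apply, smul_eq_mul, mul_comm]

/-- holomorphy of parameter integrals -/
lemma holoI {O : Set (Fin d → ℂ)} (hO : IsOpen O) (hg : Integrable g μ)
    (f₁ : (Fin d → ℂ) → Ω → ℂ)
    (hm : ∀ z ∈ O, Measurable (f₁ z))
    (hh : ∀ t, DifferentiableOn ℂ (fun z => f₁ z t) O)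
    {C : ℝ} (hC : 0 ≤ C) (hb : ∀ t, ∀ z ∈ O, ‖f₁ z t‖ ≤ C) :
    DifferentiableOn ℂ (fun z => ∫ t, f₁ z t * g t ∂μ) O := by
  intro z₀ hz₀
  obtain ⟨R, hR, hball⟩ := Metric.isOpen_iff.1 hO z₀ hz₀
  set D : Ω → (Fin d → ℂ) →L[ℂ] ℂ := fun t => fderiv ℂ (fun z => f₁ z t) z₀ with hD
  have hdiff : ∀ t, HasFDerivAt (fun z => f₁ z t) (D t) z₀ := fun t =>
    ((hh t).differentiableAt (hO.mem_nhds hz₀)).hasFDerivAt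
  have hnorm_c : ∀ n : ℕ, ‖((((n:ℂ))+2)/(R:ℂ))‖ = (n+2)/R := by
    intro n
    rw [norm_div]
    have h : ((n:ℂ)+2) = ((n+2 : ℝ) : ℂ) := by push_cast; ring
    rw [h, Complex.norm_real, Complex.norm_real]
    rw [Real.norm_of_nonneg (by positivity), Real.norm_of_nonneg hR.le]
  have hcn : ∀ n : ℕ, ∀ i : Fin d, z₀ + ((((n:ℂ))+2)/(R:ℂ))⁻¹ • expSing i ∈ O := by
    intro n i
    apply hball
    rw [mem_ball, dist_eq_norm]
    have h1 : z₀ + ((((n:ℂ))+2)/(R:ℂ))⁻¹ • expSing i - z₀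
        = ((((n:ℂ))+2)/(R:ℂ))⁻¹ • expSing i := by ring_nf
    rw [h1, norm_smul, norm_inv, hnorm_c, norm_expSing, mul_one]
    rw [inv_lt_iff_one_lt_mul₀ (by positivity)]
    have h4 : R * (((n:ℝ)+2)/R) = (n:ℝ)+2 := by field_simp
    rw [h4]
    have h5 : (0:ℝ) ≤ n := Nat.cast_nonneg n
    linarith
  have hDmeas : Measurable D := by
    have hQmeas : ∀ n : ℕ, Measurable (fun t => ∑ i,
        (((((n:ℂ))+2)/(R:ℂ)) * (f₁ (z₀ + ((((n:ℂ))+2)/(R:ℂ))⁻¹ • expSing i) t - f₁ z₀ t))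
          • (ContinuousLinearMap.proj i : (Fin d → ℂ) →L[ℂ] ℂ)) := by
      intro n
      apply Finset.measurable_sum
      intro i _
      exact ((continuous_id.smul continuous_const).measurable).comp
        (((hm _ (hcn n i)).sub (hm z₀ hz₀)).const_mul _)
    apply measurable_of_tendsto_metrizable hQmeas
    rw [tendsto_pi_nhds]
    intro t
    have hLrepr : D t = ∑ i, (D t (expSing i)) • (ContinuousLinearMap.proj i) := clm_repr _
    rw [hLrepr]
    apply tendsto_finset_sum
    intro i _
    apply Tendsto.smul_const
    have hctop : Tendsto (fun n : ℕ => ‖(((n:ℂ))+2)/(R:ℂ)‖) atTop atTop := by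
      simp only [hnorm_c]
      apply Tendsto.atTop_div_const hR
      apply tendsto_atTop_add_const_right
      exact tendsto_natCast_atTop_atTop
    have hlim := (hdiff t).lim (expSing i) (c := fun n : ℕ => (((n:ℂ))+2)/(R:ℂ))
      (l := atTop) hctop
    convert hlim using 2 with n
    exact (smul_eq_mul _ _).symm
  have main := hasFDerivAt_integral_of_dominated_loc_of_lip
    (F := fun z t => f₁ z t * g t) (F' := fun t => g t • D t) (x₀ := z₀)
    (bound := fun t => (4*C/R) * ‖g t‖) (s := ball z₀ (R/4)) (μ := μ) (ball_mem_nhds z₀ (by positivity))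
    ?_ ?_ ?_ ?_ ?_ ?_
  · exact main.2.differentiableAt.differentiableWithinAt
  · filter_upwards [hO.mem_nhds hz₀] with x hx
    exact ((hm x hx).aestronglyMeasurable).mul hg.1
  · exact hg.bdd_mul (hm z₀ hz₀).aestronglyMeasurable (ae_of_all _ fun t => hb t z₀ hz₀)
  · exact hg.1.smul hDmeas.stronglyMeasurable.aestronglyMeasurable
  · apply Filter.Eventually.of_forall
    intro t
    apply LipschitzOnWith.of_dist_le_mul
    intro x hx y hy
    have hlip := lipA hO (hh t) (fun z hz => hb t z hz) hR hball x hx y hy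
    rw [dist_eq_norm, dist_eq_norm]
    have hfact : f₁ x t * g t - f₁ y t * g t = (f₁ x t - f₁ y t) * g t := by ring
    rw [hfact, norm_mul]
    have hcoe : ((Real.nnabs ((4*C/R) * ‖g t‖)) : ℝ) = (4*C/R) * ‖g t‖ := by
      rw [Real.coe_nnabs, abs_of_nonneg (by positivity)]
    rw [hcoe]
    calc ‖f₁ x t - f₁ y t‖ * ‖g t‖ ≤ ((4*C/R) * ‖x - y‖) * ‖g t‖ :=
          mul_le_mul_of_nonneg_right hlip (norm_nonneg _)
      _ = (4*C/R) * ‖g t‖ * ‖x - y‖ := by ring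
  · exact (hg.norm.const_mul _)
  · apply Filter.Eventually.of_forall
    intro t
    exact (hdiff t).mul_const (g t)

end Aux

/-- **(Abstract Fubini-type theorem in `L^∞`.)** Let `(Ω,Σ,μ)` be a semi-finite measure
space, `O ⊆ ℂᵈ` open, `f : O × Ω → ℂ` with `f(z,·)` measurable,
`sup_{z∈O} esssup_t |f(z,t)| ≤ M`, `f(·,t)` bounded holomorphic and `φ` a bp-continuous
linear functional on `H^∞(O)` with norm bound `Cφ`. Then `t ↦ φ(f(·,t))` is measurable
and essentially bounded by `Cφ·M`, and `∫ φ(f(·,t)) g(t) dμ = φ(z ↦ ∫ f(z,t)g(t) dμ)`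
for every `g ∈ L^1(Ω)`. -/
theorem abstract_fubini_Linfty
    {d : ℕ} (O : Set (Fin d → ℂ)) (hO : IsOpen O)
    {Ω : Type*} [MeasurableSpace Ω] (μ : Measure Ω)
    (hsemifinite : ∀ s : Set Ω, MeasurableSet s → μ s = ∞ →
      ∃ u, u ⊆ s ∧ MeasurableSet u ∧ 0 < μ u ∧ μ u < ∞)
    (f : (Fin d → ℂ) → Ω → ℂ)
    (hmeas : ∀ z ∈ O, Measurable (f z))
    (M : ℝ) (hM : ∀ z ∈ O, eLpNorm (f z) ∞ μ ≤ ENNReal.ofReal M)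
    (hholo : ∀ t : Ω, DifferentiableOn ℂ (fun z => f z t) O)
    (hbdd : ∀ t : Ω, ∃ C : ℝ, ∀ z ∈ O, ‖f z t‖ ≤ C)
    (φ : ((Fin d → ℂ) → ℂ) →ₗ[ℂ] ℂ) (hφ : BPContinuous O φ)
    (Cφ : ℝ) (hCφ : 0 ≤ Cφ)
    (hφnorm : ∀ g : (Fin d → ℂ) → ℂ, DifferentiableOn ℂ g O →
      (∀ z ∈ O, ‖g z‖ ≤ 1) → ‖φ g‖ ≤ Cφ) :
    Measurable (fun t => φ (fun z => f z t)) ∧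
      eLpNorm (fun t => φ (fun z => f z t)) ∞ μ ≤ ENNReal.ofReal (Cφ * M) ∧
      ∀ g : Ω → ℂ, Integrable g μ →
        ∫ t, φ (fun z => f z t) * g t ∂μ = φ (fun z => ∫ t, f z t * g t ∂μ) := by
  classical
  -- the norm bound, rescaled
  have phibound : ∀ (u : (Fin d → ℂ) → ℂ) (c : ℝ), 0 ≤ c → DifferentiableOn ℂ u O →
      (∀ z ∈ O, ‖u z‖ ≤ c) → ‖φ u‖ ≤ Cφ * c := by
    intro u c hc hud hub
    have key : ∀ ε > (0:ℝ), ‖φ u‖ ≤ Cφ * (c + ε) := by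
      intro ε hε
      have hcε : (0:ℝ) < c + ε := by linarith
      set a : ℂ := (((c + ε : ℝ)) : ℂ)⁻¹ with ha
      have h1 : ‖φ (a • u)‖ ≤ Cφ := by
        apply hφnorm
        · exact hud.const_smul a
        · intro z hz
          rw [Pi.smul_apply, norm_smul, ha, norm_inv, Complex.norm_real,
            Real.norm_of_nonneg hcε.le]
          rw [inv_mul_le_iff₀ hcε, mul_one]
          exact le_trans (hub z hz) (by linarith)
      rw [φ.map_smul, norm_smul, ha, norm_inv, Complex.norm_real,
        Real.norm_of_nonneg hcε.le, inv_mul_le_iff₀ hcε] at h1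
      calc ‖φ u‖ ≤ (c + ε) * Cφ := h1
        _ = Cφ * (c + ε) := mul_comm _ _
    rcases eq_or_lt_of_le hCφ with hC0 | hC0
    · have := key 1 one_pos
      rw [← hC0] at this ⊢
      simpa using this
    · refine le_of_forall_pos_le_add fun ε hε => ?_
      have := key (ε / Cφ) (by positivity)
      calc ‖φ u‖ ≤ Cφ * (c + ε / Cφ) := this
        _ = Cφ * c + ε := by field_simp
  -- trivial case: O empty
  rcases Set.eq_empty_or_nonempty O with rfl | ⟨z₀, hz₀⟩
  · have hphi0 : ∀ u, φ u = 0 := by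
      intro u
      have := phibound u 0 le_rfl (fun x hx => absurd hx (Set.notMem_empty x))
        (fun x hx => absurd hx (Set.notMem_empty x))
      rw [mul_zero] at this
      exact norm_le_zero_iff.1 this
    refine ⟨by simp only [hphi0]; exact measurable_const, ?_, ?_⟩
    · simp only [hphi0]
      rw [show (fun _ : Ω => (0:ℂ)) = (0 : Ω → ℂ) from rfl, eLpNorm_zero]
      exact zero_le
    · intro g hg
      simp only [hphi0, zero_mul, integral_zero]
  -- trivial case: Ω empty
  rcases isEmpty_or_nonempty Ω with hΩ | hΩ
  · refine ⟨measurable_of_empty _, ?_, ?_⟩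
    · rw [μ.eq_zero_of_isEmpty]
      simp
    · intro g hg
      rw [μ.eq_zero_of_isEmpty]
      simp only [integral_zero_measure]
      exact (map_zero φ).symm
  -- construct the dense sequence
  obtain ⟨s, hsc, hsd⟩ := TopologicalSpace.exists_countable_dense (Fin d → ℂ)
  have hsO : (s ∩ O).Nonempty := by
    obtain ⟨x, hx1, hx2⟩ := hsd.inter_open_nonempty O hO ⟨z₀, hz₀⟩
    exact ⟨x, hx2, hx1⟩
  obtain ⟨e, he⟩ := (hsc.mono Set.inter_subset_left).exists_eq_range hsO
  have heO : ∀ k, e k ∈ O := by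
    intro k
    have : e k ∈ s ∩ O := he ▸ Set.mem_range_self k
    exact this.2
  have hdense : ∀ z ∈ O, ∀ ε > (0:ℝ), ∃ k, e k ∈ O ∧ dist (e k) z < ε := by
    intro z hz ε hε
    obtain ⟨r, hr, hrO⟩ := Metric.isOpen_iff.1 hO z hz
    obtain ⟨x, hx1, hx2⟩ := hsd.inter_open_nonempty (ball z (min ε r))
      isOpen_ball ⟨z, mem_ball_self (by positivity)⟩
    have hxO : x ∈ O := hrO (mem_ball.2 (lt_of_lt_of_le (mem_ball.1 hx1) (min_le_right _ _)))
    have hxs : x ∈ s ∩ O := ⟨hx2, hxO⟩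
    rw [he] at hxs
    obtain ⟨k, hk⟩ := hxs
    refine ⟨k, ?_, ?_⟩
    · rw [hk]; exact hxO
    · rw [hk]; exact lt_of_lt_of_le (mem_ball.1 hx1) (min_le_left _ _)
  -- part (a) : measurability
  set Ωm : ℕ → Set Ω := fun m => {t | ∀ k, ‖f (e k) t‖ ≤ m} with hΩm
  have hΩm_meas : ∀ m, MeasurableSet (Ωm m) := by
    intro m
    have : Ωm m = ⋂ k, {t | ‖f (e k) t‖ ≤ m} := by
      ext t; simp [hΩm, Set.mem_iInter]
    rw [this]
    exact MeasurableSet.iInter fun k =>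
      measurableSet_le ((hmeas (e k) (heO k)).norm) measurable_const
  have hcover : ∀ t, ∃ m : ℕ, t ∈ Ωm m := by
    intro t
    obtain ⟨C, hC⟩ := hbdd t
    refine ⟨⌈max C 0⌉₊, fun k => ?_⟩
    exact le_trans (hC (e k) (heO k)) (le_trans (le_max_left _ _) (Nat.le_ceil _))
  set f₁ : ℕ → (Fin d → ℂ) → Ω → ℂ := fun m z t => if t ∈ Ωm m then f z t else 0 with hf₁
  have hf₁m : ∀ m, ∀ z ∈ O, Measurable (f₁ m z) := by
    intro m z hz
    exact Measurable.ite (hΩm_meas m) (hmeas z hz) measurable_const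
  have hf₁h : ∀ m t, DifferentiableOn ℂ (fun z => f₁ m z t) O := by
    intro m t
    by_cases ht : t ∈ Ωm m
    · simp only [hf₁, if_pos ht]
      exact hholo t
    · simp only [hf₁, if_neg ht]
      exact differentiableOn_const 0
  have hf₁b : ∀ m : ℕ, ∀ t, ∀ z ∈ O, ‖f₁ m z t‖ ≤ (m:ℝ) := by
    intro m t z hz
    by_cases ht : t ∈ Ωm m
    · simp only [hf₁, if_pos ht]
      exact boundA hO hdense (hholo t) (fun k _ => ht k) z hz
    · simp only [hf₁, if_neg ht, norm_zero]
      positivity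
  have happrox := fun m : ℕ => approxB hO heO hdense (f₁ m) (hf₁m m) (hf₁h m) (hf₁b m)
  choose S hSval hSconv using happrox
  have hSdiff : ∀ m n t, DifferentiableOn ℂ (S m n t) O := by
    intro m n t
    obtain ⟨τ, hτ⟩ := hSval m n t
    rw [hτ]; exact hf₁h m τ
  have hSbound : ∀ m n t, ∀ z ∈ O, ‖S m n t z‖ ≤ (m:ℝ) := by
    intro m n t z hz
    obtain ⟨τ, hτ⟩ := hSval m n t
    rw [hτ]; exact hf₁b m τ z hz
  have hFm : ∀ m : ℕ, Measurable (fun t => φ (fun z => f₁ m z t)) := by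
    intro m
    apply measurable_of_tendsto_metrizable (f := fun n => fun t => φ (S m n t))
    · intro n
      exact ((S m n).map (fun w => φ w)).measurable
    · rw [tendsto_pi_nhds]
      intro t
      exact hφ (fun n => S m n t) (fun z => f₁ m z t) (fun n => hSdiff m n t) (hf₁h m t)
        ⟨m, fun n => hSbound m n t⟩ ⟨m, hf₁b m t⟩ (hSconv m t)
  have hmeasF : Measurable (fun t => φ (fun z => f z t)) := by
    have hFeq : (fun t => φ (fun z => f z t))
        = fun t => (fun m t' => φ (fun z => f₁ m z t')) (Nat.find (hcover t)) t := by
      funext t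
      have ht : t ∈ Ωm (Nat.find (hcover t)) := Nat.find_spec (hcover t)
      congr 1
      funext z
      simp only [hf₁, if_pos ht]
    rw [hFeq]
    exact Measurable.find (f := fun m => fun t' => φ (fun z => f₁ m z t'))
      (p := fun m t' => t' ∈ Ωm m) hFm (fun m => hΩm_meas m) hcover
  refine ⟨hmeasF, ?_, ?_⟩
  -- the exceptional null set
  all_goals {
    set M' : ℝ := max M 0 with hM'def
    have hM'0 : 0 ≤ M' := le_max_right M 0
    have hofreal : ENNReal.ofReal M = ENNReal.ofReal M' := by
      rcases le_or_gt 0 M with h | h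
      · rw [hM'def, max_eq_left h]
      · rw [hM'def, max_eq_right h.le, ENNReal.ofReal_of_nonpos h.le, ENNReal.ofReal_zero]
    have haeM : ∀ z ∈ O, ∀ᵐ t ∂μ, ‖f z t‖ ≤ M' := by
      intro z hz
      have h1 := hM z hz
      rw [eLpNorm_exponent_top, hofreal] at h1
      filter_upwards [enorm_ae_le_eLpNormEssSup (f z) μ] with t ht
      have h2 : ‖f z t‖ₑ ≤ ENNReal.ofReal M' := le_trans ht h1
      rw [← ofReal_norm, ENNReal.ofReal_le_ofReal_iff hM'0] at h2
      exact h2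
    set N : Set Ω := ⋃ k, {t | ¬ (‖f (e k) t‖ ≤ M')} with hN
    have hNmeas : MeasurableSet N :=
      MeasurableSet.iUnion fun k =>
        (measurableSet_le ((hmeas (e k) (heO k)).norm) measurable_const).compl
    have hNnull : μ N = 0 := by
      apply measure_iUnion_null
      intro k
      rw [← ae_iff]
      exact haeM (e k) (heO k)
    have haeN : ∀ᵐ t ∂μ, t ∉ N := by
      rw [ae_iff]
      simpa using hNnull
    have hNc : ∀ t, t ∉ N → ∀ z ∈ O, ‖f z t‖ ≤ M' := by
      intro t ht z hz
      simp only [hN, Set.mem_iUnion, Set.mem_setOf_eq, not_exists, not_not] at ht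
      exact boundA hO hdense (hholo t) (fun k _ => ht k) z hz
    set f' : (Fin d → ℂ) → Ω → ℂ := fun z t => if t ∈ N then 0 else f z t with hf'
    have hf'm : ∀ z ∈ O, Measurable (f' z) := fun z hz =>
      Measurable.ite hNmeas measurable_const (hmeas z hz)
    have hf'h : ∀ t, DifferentiableOn ℂ (fun z => f' z t) O := by
      intro t
      by_cases ht : t ∈ N
      · simp only [hf', if_pos ht]; exact differentiableOn_const 0
      · simp only [hf', if_neg ht]; exact hholo t
    have hf'b : ∀ t, ∀ z ∈ O, ‖f' z t‖ ≤ M' := by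
      intro t z hz
      by_cases ht : t ∈ N
      · simp only [hf', if_pos ht, norm_zero]; exact hM'0
      · simp only [hf', if_neg ht]; exact hNc t ht z hz
    first
    | -- conclusion 2 : essential sup bound
      (rw [eLpNorm_exponent_top, show ENNReal.ofReal (Cφ * M) = ENNReal.ofReal (Cφ * M') from ?_]
       · apply eLpNormEssSup_le_of_ae_bound (C := Cφ * M')
         filter_upwards [haeN] with t ht
         exact phibound (fun z => f z t) M' hM'0 (hholo t) (hNc t ht)
       · rcases le_or_gt 0 M with h | h
         · rw [hM'def, max_eq_left h]
         · rw [hM'def, max_eq_right h.le, mul_zero, ENNReal.ofReal_zero,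
             ENNReal.ofReal_of_nonpos (mul_nonpos_of_nonneg_of_nonpos hCφ h.le)])
    | -- conclusion 3 : the Fubini identity
      (intro g hg
       obtain ⟨S', hS'val, hS'conv⟩ := approxB hO heO hdense f' hf'm hf'h hf'b
       have hS'diff : ∀ n t, DifferentiableOn ℂ (S' n t) O := by
         intro n t
         obtain ⟨τ, hτ⟩ := hS'val n t
         rw [hτ]; exact hf'h τ
       have hS'bound : ∀ n t, ∀ z ∈ O, ‖S' n t z‖ ≤ M' := by
         intro n t z hz
         obtain ⟨τ, hτ⟩ := hS'val n t
         rw [hτ]; exact hf'b τ z hz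
       -- step 1
       have step1 : ∫ t, φ (fun z => f z t) * g t ∂μ = ∫ t, φ (fun z => f' z t) * g t ∂μ := by
         apply integral_congr_ae
         filter_upwards [haeN] with t ht
         have : (fun z => f' z t) = fun z => f z t := by
           funext z; simp only [hf', if_neg ht]
         rw [this]
       -- per-t bp-convergence
       have hbp : ∀ t, Tendsto (fun n => φ (S' n t)) atTop (𝓝 (φ (fun z => f' z t))) := by
         intro t
         exact hφ (fun n => S' n t) (fun z => f' z t) (fun n => hS'diff n t) (hf'h t)
           ⟨M', fun n => hS'bound n t⟩ ⟨M', hf'b t⟩ (hS'conv t)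
       -- step 2 : dominated convergence
       have step2 : Tendsto (fun n => ∫ t, φ (S' n t) * g t ∂μ) atTop
           (𝓝 (∫ t, φ (fun z => f' z t) * g t ∂μ)) := by
         apply tendsto_integral_of_dominated_convergence (bound := fun t => (Cφ * M') * ‖g t‖)
         · intro n
           exact ((S' n).map (fun w => φ w)).measurable.aestronglyMeasurable.mul hg.1
         · exact hg.norm.const_mul _
         · intro n
           apply Filter.Eventually.of_forall
           intro t
           rw [norm_mul]
           exact mul_le_mul_of_nonneg_right
             (phibound (S' n t) M' hM'0 (hS'diff n t) (hS'bound n t)) (norm_nonneg _)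
         · apply Filter.Eventually.of_forall
           intro t
           exact (hbp t).mul_const (g t)
       -- step 3
       have step3 : ∀ n, ∫ t, φ (S' n t) * g t ∂μ = φ (fun z => ∫ t, S' n t z * g t ∂μ) :=
         fun n => simpleC hg φ (S' n)
       -- holomorphy of the limit integral
       have hI'diff : DifferentiableOn ℂ (fun z => ∫ t, f' z t * g t ∂μ) O :=
         holoI hO hg f' hf'm hf'h hM'0 hf'b
       -- bounds on the approximating integrals
       have hGbound : ∀ n, ∀ z ∈ O, ‖∫ t, S' n t z * g t ∂μ‖ ≤ M' * ∫ t, ‖g t‖ ∂μ := by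
         intro n z hz
         calc ‖∫ t, S' n t z * g t ∂μ‖ ≤ ∫ t, ‖S' n t z * g t‖ ∂μ :=
               norm_integral_le_integral_norm _
           _ ≤ ∫ t, M' * ‖g t‖ ∂μ := by
               apply integral_mono (intSimple hg (S' n) (fun w => w z)).norm
                 (hg.norm.const_mul _)
               intro t
               simp only [norm_mul]
               exact mul_le_mul_of_nonneg_right (hS'bound n t z hz) (norm_nonneg _)
           _ = M' * ∫ t, ‖g t‖ ∂μ := by rw [integral_const_mul]
       have hIint : ∀ z ∈ O, Integrable (fun t => f' z t * g t) μ := by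
         intro z hz
         exact hg.bdd_mul (hf'm z hz).aestronglyMeasurable (ae_of_all _ fun t => hf'b t z hz)
       have hIbound : ∀ z ∈ O, ‖∫ t, f' z t * g t ∂μ‖ ≤ M' * ∫ t, ‖g t‖ ∂μ := by
         intro z hz
         calc ‖∫ t, f' z t * g t ∂μ‖ ≤ ∫ t, ‖f' z t * g t‖ ∂μ :=
               norm_integral_le_integral_norm _
           _ ≤ ∫ t, M' * ‖g t‖ ∂μ := by
               apply integral_mono (hIint z hz).norm (hg.norm.const_mul _)
               intro t
               simp only [norm_mul]
               exact mul_le_mul_of_nonneg_right (hf'b t z hz) (norm_nonneg _)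
           _ = M' * ∫ t, ‖g t‖ ∂μ := by rw [integral_const_mul]
       -- pointwise convergence of the approximating integrals
       have hGconv : ∀ z ∈ O, Tendsto (fun n => ∫ t, S' n t z * g t ∂μ) atTop
           (𝓝 (∫ t, f' z t * g t ∂μ)) := by
         intro z hz
         apply tendsto_integral_of_dominated_convergence (bound := fun t => M' * ‖g t‖)
         · intro n
           exact ((S' n).map (fun w => w z)).measurable.aestronglyMeasurable.mul hg.1
         · exact hg.norm.const_mul _
         · intro n
           apply Filter.Eventually.of_forall
           intro t
           rw [norm_mul]
           exact mul_le_mul_of_nonneg_right (hS'bound n t z hz) (norm_nonneg _)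
         · apply Filter.Eventually.of_forall
           intro t
           exact (hS'conv t z hz).mul_const (g t)
       -- step 4 : bp-continuity on the integrals
       have step4 : Tendsto (fun n => φ (fun z => ∫ t, S' n t z * g t ∂μ)) atTop
           (𝓝 (φ (fun z => ∫ t, f' z t * g t ∂μ))) := by
         exact hφ _ _ (fun n => simpleD hg (S' n) (fun t => hS'diff n t)) hI'diff
           ⟨M' * ∫ t, ‖g t‖ ∂μ, hGbound⟩ ⟨M' * ∫ t, ‖g t‖ ∂μ, hIbound⟩ hGconv
       -- combine
       have hmain : ∫ t, φ (fun z => f' z t) * g t ∂μ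
           = φ (fun z => ∫ t, f' z t * g t ∂μ) := by
         apply tendsto_nhds_unique step2
         simpa only [step3] using step4
       -- step 5 : replace f' by f inside φ
       have step5 : φ (fun z => ∫ t, f' z t * g t ∂μ) = φ (fun z => ∫ t, f z t * g t ∂μ) := by
         have hOagree : ∀ z ∈ O, (∫ t, f' z t * g t ∂μ) = ∫ t, f z t * g t ∂μ := by
           intro z hz
           apply integral_congr_ae
           filter_upwards [haeN] with t ht
           simp only [hf', if_neg ht]
         have hvdiff : DifferentiableOn ℂ (fun z => ∫ t, f z t * g t ∂μ) O :=
           hI'diff.congr fun z hz => (hOagree z hz).symm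
         have hzero : ∀ z ∈ O,
             ((fun z => ∫ t, f' z t * g t ∂μ) - fun z => ∫ t, f z t * g t ∂μ) z = 0 := by
           intro z hz
           simp only [Pi.sub_apply]
           rw [hOagree z hz, sub_self]
         have hdiffsub : DifferentiableOn ℂ
             ((fun z => ∫ t, f' z t * g t ∂μ) - fun z => ∫ t, f z t * g t ∂μ) O :=
           hI'diff.sub hvdiff
         have := phibound _ 0 le_rfl hdiffsub (fun z hz => by rw [hzero z hz]; simp)
         rw [mul_zero] at this
         have h0 : φ ((fun z => ∫ t, f' z t * g t ∂μ) - fun z => ∫ t, f z t * g t ∂μ) = 0 :=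
           norm_le_zero_iff.1 this
         rw [map_sub, sub_eq_zero] at h0
         exact h0
       rw [step1, hmain, step5])
  }
end

section
/- Let O be a second countable topological space, (Ω, Σ) a measurable space, and X a metric space. Suppose f : O × Ω → X is such that f(·, t) is continuous for each t ∈ Ω and f(z, ·) is Σ-to-Borel measurable for each z ∈ O. Then f is measurable with respect to the product σ-algebra Borel(O) ⊗ Σ on O × Ω and the Borel σ-algebra on X. -/
open Set MeasureTheory TopologicalSpace

lemma mattner_aux_real
    {O : Type*} [TopologicalSpace O] [SecondCountableTopology O]
    [MeasurableSpace O] [BorelSpace O]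
    {Ω : Type*} [MeasurableSpace Ω]
    (g : O → Ω → ℝ)
    (hcont : ∀ t : Ω, Continuous (fun z => g z t))
    (hmeas : ∀ z : O, Measurable (g z)) :
    Measurable (fun p : O × Ω => g p.1 p.2) := by
  obtain ⟨D, hDc, hDd⟩ := TopologicalSpace.exists_countable_dense O
  have hB := TopologicalSpace.isBasis_countableBasis O
  have hBc := TopologicalSpace.countable_countableBasis O
  apply measurable_of_Ioi
  intro a
  have key : (fun p : O × Ω => g p.1 p.2) ⁻¹' Ioi a =
      ⋃ q ∈ {q : ℚ | a < (q : ℝ)}, ⋃ U ∈ countableBasis O,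
        U ×ˢ {t : Ω | ∀ w ∈ U ∩ D, (q : ℝ) ≤ g w t} := by
    ext ⟨z, t⟩
    simp only [mem_preimage, mem_Ioi, mem_iUnion, mem_setOf_eq, mem_prod, exists_prop]
    constructor
    · intro h
      obtain ⟨q, hq1, hq2⟩ := exists_rat_btwn h
      have hV : IsOpen ((fun w => g w t) ⁻¹' Ioi (q : ℝ)) := (hcont t).isOpen_preimage _ isOpen_Ioi
      obtain ⟨U, hU, hzU, hUV⟩ := hB.exists_subset_of_mem_open hq2 hV
      exact ⟨q, hq1, U, hU, hzU, fun w hw => le_of_lt (hUV hw.1)⟩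
    · rintro ⟨q, hq, U, hU, hzU, hle⟩
      refine lt_of_lt_of_le hq ?_
      have hclosed : IsClosed {w : O | (q : ℝ) ≤ g w t} :=
        isClosed_le continuous_const (hcont t)
      have hsub : U ⊆ {w : O | (q : ℝ) ≤ g w t} := by
        have h1 : U ⊆ closure (U ∩ D) :=
          hDd.open_subset_closure_inter (isOpen_of_mem_countableBasis hU)
        refine h1.trans ?_
        rw [← hclosed.closure_eq]
        exact closure_mono fun w hw => hle w hw
      exact hsub hzU
  rw [key]
  refine MeasurableSet.biUnion (Set.to_countable _) fun q _ => ?_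
  refine MeasurableSet.biUnion hBc fun U hU => ?_
  refine ((isOpen_of_mem_countableBasis hU).measurableSet).prod ?_
  have : {t : Ω | ∀ w ∈ U ∩ D, (q : ℝ) ≤ g w t} = ⋂ w ∈ U ∩ D, {t | (q : ℝ) ≤ g w t} := by
    ext t; simp
  rw [this]
  exact MeasurableSet.biInter ((hDc.mono (inter_subset_right)))
    fun w _ => measurableSet_le measurable_const (hmeas w)

/-- **(Mattner's joint measurability lemma.)** Let `O` be a second countable topological
space, `(Ω,Σ)` a measurable space and `X` a metric space. If `f : O × Ω → X` is
continuous in the first variable and measurable in the second, then `f` is jointly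
measurable with respect to the product σ-algebra `Borel(O) ⊗ Σ`. -/
theorem mattner_joint_measurability
    {O : Type*} [TopologicalSpace O] [SecondCountableTopology O]
    [MeasurableSpace O] [BorelSpace O]
    {Ω : Type*} [MeasurableSpace Ω]
    {X : Type*} [MetricSpace X] [MeasurableSpace X] [BorelSpace X]
    (f : O → Ω → X)
    (hcont : ∀ t : Ω, Continuous (fun z => f z t))
    (hmeas : ∀ z : O, Measurable (f z)) :
    Measurable (fun p : O × Ω => f p.1 p.2) := by
  apply measurable_of_isClosed
  intro C hC
  rcases eq_empty_or_nonempty C with rfl | hne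
  · simp
  · have hg : Measurable (fun p : O × Ω => Metric.infDist (f p.1 p.2) C) := by
      apply mattner_aux_real (fun z t => Metric.infDist (f z t) C)
      · exact fun t => Metric.continuous_infDist_pt C |>.comp (hcont t)
      · exact fun z => (Metric.continuous_infDist_pt C).measurable.comp (hmeas z)
    have : (fun p : O × Ω => f p.1 p.2) ⁻¹' C =
        (fun p : O × Ω => Metric.infDist (f p.1 p.2) C) ⁻¹' {0} := by
      ext p
      simp [hC.mem_iff_infDist_zero hne]
    rw [this]
    exact hg (measurableSet_singleton 0)
end

section
/- Let O ⊆ ℂ be open, E a complex Banach lattice, and F : O → E holomorphic. Then for every compact K ⊆ O the set F(K) is order bounded in E: there exists u ∈ E, u ≥ 0, such that |F(z)| ≤ u for all z ∈ K. -/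
open Filter Complex

section Aux

variable {E : Type*} [NormedAddCommGroup E] [Lattice E] [HasSolidNorm E] [IsOrderedAddMonoid E] [NormedSpace ℂ E]

omit [NormedSpace ℂ E] in
private lemma aux_pow_two_semiclosed {x : E} (k : ℕ) (h : 0 ≤ (2 ^ k) • x) : 0 ≤ x := by
  induction k generalizing x with
  | zero => simpa using h
  | succ k ih =>
    have h2 : (2 ^ (k + 1)) • x = (2 ^ k) • (2 • x) := by
      rw [← mul_smul, ← pow_succ]
    exact nsmul_two_semiclosed (ih (x := 2 • x) (by rwa [← h2]))

/-- Nonnegative real scalars (acting through `ℂ`) preserve positivity, because the scalar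
action is continuous and dyadic rationals act through `ℕ`-smul. -/
private lemma aux_smul_nonneg {x : E} (hx : 0 ≤ x) {t : ℝ} (ht : 0 ≤ t) :
    0 ≤ ((t : ℂ)) • x := by
  set S : Set ℝ := {s : ℝ | 0 ≤ ((s : ℂ)) • x} with hS
  have hSclosed : IsClosed S := by
    have hc : Continuous fun s : ℝ => ((s : ℂ)) • x :=
      ((Complex.continuous_ofReal).smul continuous_const)
    exact isClosed_nonneg.preimage hc
  have hdyadic : ∀ m k : ℕ, ((m : ℝ) / 2 ^ k) ∈ S := by
    intro m k
    have hy : (2 ^ k) • ((((m : ℝ) / 2 ^ k : ℝ) : ℂ) • x) = m • x := by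
      rw [← Nat.cast_smul_eq_nsmul ℂ, ← Nat.cast_smul_eq_nsmul ℂ, smul_smul]
      congr 1
      push_cast
      field_simp
    have : 0 ≤ (2 ^ k) • ((((m : ℝ) / 2 ^ k : ℝ) : ℂ) • x) := by
      rw [hy]; exact nsmul_nonneg hx m
    exact aux_pow_two_semiclosed k this
  -- approximate `t` by dyadic rationals
  have htend : Tendsto (fun k : ℕ => ((⌊t * 2 ^ k⌋₊ : ℝ) / 2 ^ k)) atTop (nhds t) := by
    have hupper : ∀ k : ℕ, ((⌊t * 2 ^ k⌋₊ : ℝ) / 2 ^ k) ≤ t := by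
      intro k
      rw [div_le_iff₀ (by positivity)]
      exact Nat.floor_le (by positivity)
    have hlower : ∀ k : ℕ, t - (1 / 2) ^ k ≤ ((⌊t * 2 ^ k⌋₊ : ℝ) / 2 ^ k) := by
      intro k
      have h2k : (0:ℝ) < 2 ^ k := by positivity
      rw [sub_le_iff_le_add]
      have heq : ((⌊t * 2 ^ k⌋₊ : ℝ)) / 2 ^ k + (1/2 : ℝ) ^ k
          = ((⌊t * 2 ^ k⌋₊ : ℝ) + 1) / 2 ^ k := by
        rw [div_pow, one_pow]
        ring
      rw [heq, le_div_iff₀ h2k]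
      exact (Nat.lt_floor_add_one (t * 2 ^ k)).le
    have h1 : Tendsto (fun k : ℕ => t - (1 / 2 : ℝ) ^ k) atTop (nhds t) := by
      have := tendsto_pow_atTop_nhds_zero_of_lt_one (by norm_num : (0:ℝ) ≤ 1/2)
        (by norm_num : (1/2 : ℝ) < 1)
      simpa using tendsto_const_nhds.sub this
    exact tendsto_of_tendsto_of_tendsto_of_le_of_le h1 tendsto_const_nhds hlower hupper
  exact hSclosed.mem_of_tendsto htend (Eventually.of_forall fun k => hdyadic _ k)

private lemma aux_smul_le_abs {x : E} {t : ℝ} (ht : |t| ≤ 1) : ((t : ℂ)) • x ≤ |x| := by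
  have h1 : (0:ℝ) ≤ (1 + t) / 2 := by obtain ⟨h, h'⟩ := abs_le.1 ht; linarith
  have h2 : (0:ℝ) ≤ (1 - t) / 2 := by obtain ⟨h, h'⟩ := abs_le.1 ht; linarith
  have e1 : (((1 + t)/2 : ℝ) : ℂ) • x ≤ (((1 + t)/2 : ℝ) : ℂ) • |x| := by
    have := aux_smul_nonneg (sub_nonneg.2 (le_abs_self x)) h1
    rwa [smul_sub, sub_nonneg] at this
  have e2 : (((1 - t)/2 : ℝ) : ℂ) • (-x) ≤ (((1 - t)/2 : ℝ) : ℂ) • |x| := by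
    have := aux_smul_nonneg (sub_nonneg.2 (neg_le_abs x)) h2
    rwa [smul_sub, sub_nonneg] at this
  calc ((t : ℂ)) • x
      = (((1 + t)/2 : ℝ) : ℂ) • x + (((1 - t)/2 : ℝ) : ℂ) • (-x) := by
        rw [smul_neg, ← sub_eq_add_neg, ← sub_smul]
        congr 2
        push_cast
        ring
    _ ≤ (((1 + t)/2 : ℝ) : ℂ) • |x| + (((1 - t)/2 : ℝ) : ℂ) • |x| :=
        add_le_add e1 e2
    _ = |x| := by
        rw [← add_smul]
        have : ((((1 + t)/2 : ℝ)) : ℂ) + (((1 - t)/2 : ℝ) : ℂ) = 1 := by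
          push_cast; ring
        rw [this, one_smul]

private lemma aux_abs_smul_le {x : E} {t : ℝ} (ht : |t| ≤ 1) : |((t : ℂ)) • x| ≤ |x| := by
  apply sup_le (aux_smul_le_abs ht)
  have : -(((t : ℂ)) • x) = (((-t : ℝ) : ℂ)) • x := by push_cast; rw [neg_smul]
  rw [this]
  exact aux_smul_le_abs (by rwa [abs_neg])

/-- Key pointwise estimate: a complex scalar of modulus at most one distorts the modulus in a
controlled way. -/
private lemma aux_abs_csmul_le {x : E} {d : ℂ} (hd : ‖d‖ ≤ 1) :
    |d • x| ≤ |x| + |Complex.I • x| := by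
  have hdecomp : d • x = ((d.re : ℂ)) • x + ((d.im : ℂ)) • (Complex.I • x) := by
    rw [smul_smul, ← add_smul]
    congr 1
    exact (Complex.re_add_im d).symm
  rw [hdecomp]
  refine (abs_add_le _ _).trans (add_le_add ?_ ?_)
  · exact aux_abs_smul_le ((Complex.abs_re_le_norm d).trans hd)
  · exact aux_abs_smul_le ((Complex.abs_im_le_norm d).trans hd)

/-- Local order bound on a ball, from the power series expansion. -/
private lemma aux_local_bound [CompleteSpace E] {F : ℂ → E} {a : ℂ}
    (hA : AnalyticAt ℂ F a) :
    ∃ ρ : ℝ, 0 < ρ ∧ ∃ u : E, 0 ≤ u ∧ ∀ z ∈ Metric.ball a ρ, |F z| ≤ u := by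
  obtain ⟨p, r, hr⟩ : ∃ p r, HasFPowerSeriesOnBall F p a r := by
    obtain ⟨p, hp⟩ := hA
    obtain ⟨r, hr⟩ := hp
    exact ⟨p, r, hr⟩
  obtain ⟨ρ, hρ0, hρr⟩ := ENNReal.lt_iff_exists_nnreal_btwn.1 hr.r_pos
  have hρpos : (0 : ℝ) < ρ := by exact_mod_cast hρ0
  set c : ℕ → E := fun n => (((ρ : ℝ)) : ℂ) ^ n • p.coeff n with hc
  set v : ℕ → E := fun n => |c n| + |Complex.I • c n| with hv
  have hvnn : ∀ n, 0 ≤ v n := fun n => add_nonneg (abs_nonneg _) (abs_nonneg _)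
  have hsum_norm : Summable fun n => ‖p n‖ * (ρ : ℝ) ^ n :=
    p.summable_norm_mul_pow (hρr.trans_le hr.r_le)
  have hcoeff : ∀ n, ‖p.coeff n‖ ≤ ‖p n‖ := by
    intro n
    calc ‖p.coeff n‖ = ‖p n (fun _ => 1)‖ := rfl
      _ ≤ ‖p n‖ * ∏ _i : Fin n, ‖(1:ℂ)‖ := (p n).le_opNorm _
      _ = ‖p n‖ := by simp
  have hcn : ∀ n, ‖c n‖ ≤ ‖p n‖ * (ρ:ℝ) ^ n := by
    intro n
    rw [hc]
    simp only [norm_smul, norm_pow, Complex.norm_real, Real.norm_of_nonneg hρpos.le]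
    rw [mul_comm]
    exact mul_le_mul_of_nonneg_right (hcoeff n) (by positivity)
  have hvsum : Summable v := by
    apply Summable.of_norm_bounded (g := fun n => 2 * (‖p n‖ * (ρ:ℝ) ^ n)) (hsum_norm.mul_left 2)
    intro n
    calc ‖v n‖ ≤ ‖|c n|‖ + ‖|Complex.I • c n|‖ := norm_add_le _ _
      _ = ‖c n‖ + ‖Complex.I • c n‖ := by rw [norm_abs_eq_norm, norm_abs_eq_norm]
      _ = 2 * ‖c n‖ := by
          have hI : ‖Complex.I • c n‖ = ‖c n‖ := by
            rw [norm_smul, Complex.norm_I, one_mul]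
          rw [hI]; ring
      _ ≤ 2 * (‖p n‖ * (ρ:ℝ) ^ n) := by
          exact mul_le_mul_of_nonneg_left (hcn n) (by norm_num)
  refine ⟨ρ, hρpos, ∑' n, v n, tsum_nonneg hvnn, ?_⟩
  intro z hz
  have hz' : z ∈ EMetric.ball a r := by
    have : z ∈ EMetric.ball a (ρ : ENNReal) := by
      rwa [EMetric.ball, Metric.emetric_ball_nnreal]
    exact EMetric.ball_subset_ball hρr.le this
  have hsum := hr.hasSum_sub hz'
  have hρC : ((ρ:ℝ) : ℂ) ≠ 0 := by exact_mod_cast hρpos.ne'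
  have hterm : ∀ n, (p n fun _ => z - a) = (((z - a) / ((ρ:ℝ):ℂ)) ^ n) • c n := by
    intro n
    rw [FormalMultilinearSeries.apply_eq_pow_smul_coeff, hc]
    rw [smul_smul, ← mul_pow, div_mul_cancel₀ _ hρC]
  have habs : ∀ n, |(p n fun _ => z - a)| ≤ v n := by
    intro n
    rw [hterm n]
    refine (aux_abs_csmul_le ?_)
    rw [norm_pow]
    apply pow_le_one₀ (norm_nonneg _)
    rw [norm_div, Complex.norm_real, Real.norm_of_nonneg hρpos.le,
      div_le_one hρpos]
    rw [← Complex.dist_eq]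
    exact (Metric.mem_ball.1 hz).le
  have hbound : ∀ s : Finset ℕ, |∑ n ∈ s, (p n fun _ => z - a)| ≤ ∑' n, v n := by
    intro s
    calc |∑ n ∈ s, (p n fun _ => z - a)|
        ≤ ∑ n ∈ s, |(p n fun _ => z - a)| :=
          Finset.le_sum_of_subadditive _ abs_zero.le abs_add_le s _
      _ ≤ ∑ n ∈ s, v n := Finset.sum_le_sum fun n _ => habs n
      _ ≤ ∑' n, v n := Summable.sum_le_tsum s (fun n _ => hvnn n) hvsum
  have hcont : Continuous fun y : E => |y| := by
    apply LipschitzWith.continuous (K := 1)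
    apply LipschitzWith.of_dist_le_mul
    intro x y
    simpa [dist_eq_norm] using norm_abs_sub_abs x y
  exact le_of_tendsto ((hcont.tendsto (F z)).comp hsum) (Eventually.of_forall hbound)

end Aux

/-- **(Order boundedness of holomorphic images of compacts.)** Let `O ⊆ ℂ` be open, `E` a
complex Banach lattice, and `F : O → E` holomorphic. Then for every compact `K ⊆ O`
the set `F(K)` is order bounded: there is `u ≥ 0` with `|F z| ≤ u` for all `z ∈ K`. -/
theorem orderBounded_of_holomorphic_on_compact
    {E : Type*} [NormedAddCommGroup E] [Lattice E] [HasSolidNorm E] [IsOrderedAddMonoid E] [NormedSpace ℂ E] [CompleteSpace E]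
    (O : Set ℂ) (hO : IsOpen O)
    (F : ℂ → E) (hF : DifferentiableOn ℂ F O)
    (K : Set ℂ) (hK : IsCompact K) (hKO : K ⊆ O) :
    ∃ u : E, 0 ≤ u ∧ ∀ z ∈ K, |F z| ≤ u := by
  have hA : AnalyticOnNhd ℂ F O := hF.analyticOnNhd hO
  have key : ∀ a : ℂ, ∃ ρ : ℝ, 0 < ρ ∧ ∃ u : E, 0 ≤ u ∧
      (a ∈ K → ∀ z ∈ Metric.ball a ρ, |F z| ≤ u) := by
    intro a
    by_cases ha : a ∈ K
    · obtain ⟨ρ, hρ, u, hu, hball⟩ := aux_local_bound (hA a (hKO ha))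
      exact ⟨ρ, hρ, u, hu, fun _ => hball⟩
    · exact ⟨1, one_pos, 0, le_refl 0, fun h => absurd h ha⟩
  choose ρ hρ u hu hball using key
  obtain ⟨t, htK, hcover⟩ := hK.elim_nhds_subcover (fun a => Metric.ball a (ρ a))
    (fun a _ => Metric.ball_mem_nhds a (hρ a))
  refine ⟨∑ a ∈ t, u a, Finset.sum_nonneg fun a _ => hu a, ?_⟩
  intro z hz
  obtain ⟨a, hat, hza⟩ := Set.mem_iUnion₂.1 (hcover hz)
  exact (hball a (htK a hat) z hza).trans (Finset.single_le_sum (fun b _ => hu b) hat)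
end
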